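/- arXiv:math-ph/9908006 — 4 statements merged into one kernel-verified Lean document; each statement's English description precedes it below -/
import Mathlib

section
/- For all ψ₁, ψ₂ : Finset α → ℂ, every x ∈ α, and every finite ω ⊆ α with x ∉ ω, the operator D satisfies the Leibniz rule [D_{x}(ψ₁ * ψ₂)](ω) = [(D_{x}ψ₁) * ψ₂ + ψ₁ * (D_{x}ψ₂)](ω). -/
open Finset

noncomputable section

variable {α : Type*} [DecidableEq α]

/-- The convolution `(ψ₁ * ψ₂)(ω) := Σ_{ω₁ ⊆ ω} ψ₁(ω₁)·ψ₂(ω \ ω₁)`. -/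
def starMul (ψ₁ ψ₂ : Finset α → ℂ) : Finset α → ℂ :=
  fun ω => ∑ ω₁ ∈ ω.powerset, ψ₁ ω₁ * ψ₂ (ω \ ω₁)

/-- `(D_{ω'}ψ)(ω) := ψ(ω ∪ ω')` if `ω ∩ ω' = ∅` and `0` otherwise. -/
def Dop (ω' : Finset α) (ψ : Finset α → ℂ) : Finset α → ℂ :=
  fun ω => if Disjoint ω ω' then ψ (ω ∪ ω') else 0

/-- Leibniz rule: for all `ψ₁, ψ₂`, every `x ∈ α` and every finite `ω` with `x ∉ ω`,
`[D_x(ψ₁ * ψ₂)](ω) = [(D_x ψ₁) * ψ₂ + ψ₁ * (D_x ψ₂)](ω)`. -/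
theorem Dop_starMul_leibniz (ψ₁ ψ₂ : Finset α → ℂ) (x : α) (ω : Finset α) (hx : x ∉ ω) :
    Dop {x} (starMul ψ₁ ψ₂) ω = starMul (Dop {x} ψ₁) ψ₂ ω + starMul ψ₁ (Dop {x} ψ₂) ω := by
  have hdisj : Disjoint ω ({x} : Finset α) := by simp [hx]
  have hunion : ω ∪ {x} = insert x ω := by
    ext a; simp [or_comm]
  simp only [Dop, starMul, if_pos hdisj, hunion]
  rw [Finset.sum_powerset_insert hx]
  rw [add_comm]
  congr 1
  ·
    refine Finset.sum_congr rfl fun ω₁ hω₁ => ?_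
    rw [Finset.mem_powerset] at hω₁
    have hx₁ : x ∉ ω₁ := fun h => hx (hω₁ h)
    have : Disjoint ω₁ ({x} : Finset α) := by simp [hx₁]
    rw [if_pos this]
    have hset : insert x ω \ ω₁ = ω \ ω₁ ∪ {x} := by
      ext a
      simp only [Finset.mem_insert, Finset.mem_sdiff, Finset.mem_union, Finset.mem_singleton]
      aesop
    have hset2 : ω₁ ∪ {x} = insert x ω₁ := by ext a; simp [or_comm]
    have hset3 : insert x ω \ insert x ω₁ = ω \ ω₁ := by
      ext a
      simp only [Finset.mem_sdiff, Finset.mem_insert]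
      aesop
    rw [hset2, hset3]
  · refine Finset.sum_congr rfl fun ω₁ hω₁ => ?_
    rw [Finset.mem_powerset] at hω₁
    have hx₁ : x ∉ ω₁ := fun h => hx (hω₁ h)
    have hd : Disjoint (ω \ ω₁) ({x} : Finset α) := by
      simp [Finset.disjoint_singleton_right, hx]
    rw [if_pos hd]
    have hset : insert x ω \ insert x ω₁ = ω \ ω₁ := by
      ext a
      simp only [Finset.mem_sdiff, Finset.mem_insert, Finset.mem_union, Finset.mem_singleton]
      aesop
    have hset4 : insert x ω \ ω₁ = ω \ ω₁ ∪ {x} := by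
      ext a
      simp only [Finset.mem_insert, Finset.mem_sdiff, Finset.mem_union, Finset.mem_singleton]
      aesop
    rw [hset4]

end
end

section
/- For every ψ : Finset α → ℂ with ψ(∅) = 0, every x ∈ α, and every finite ω ⊆ α with x ∉ ω, one has [D_{x}(exp* ψ)](ω) = [(exp* ψ) * (D_{x}ψ)](ω). -/
open Finset

noncomputable section

variable {α : Type*} [DecidableEq α]

/-- The unit `1*` of the convolution algebra. -/
def starUnit : Finset α → ℂ := fun ω => if ω = ∅ then 1 else 0

/-- Convolution powers `ψ^{*n}`. -/
def starPow (ψ : Finset α → ℂ) : ℕ → Finset α → ℂ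
  | 0 => starUnit
  | n + 1 => starMul ψ (starPow ψ n)

/-- `exp* ψ := Σ_{n≥0} ψ^{*n}/n!`; for `ψ(∅) = 0` this is a pointwise finite sum since
`ψ^{*n}(ω) = 0` whenever `n > |ω|`. -/
def expStar (ψ : Finset α → ℂ) : Finset α → ℂ :=
  fun ω => ∑ n ∈ Finset.range (ω.card + 1), (n.factorial : ℂ)⁻¹ * starPow ψ n ω

/-! `D_x` is a derivation of the convolution algebra on sets avoiding `x`, so
`D_x ψ^{*(n+1)} = (n + 1) · (D_x ψ) * ψ^{*n}` and the exponential series differentiates term by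
term: `D_x exp* ψ = Σ_m (D_x ψ) * ψ^{*m} / m! = (D_x ψ) * exp* ψ`. Since `ψ ∅ = 0`, `ψ^{*n}`
vanishes on sets with fewer than `n` elements, so on subsets of `ω` the truncated series defining
`exp* ψ` may all be cut at the same length `|ω|`, and the series can be pulled out of a
convolution. -/

section Convolution

variable (f g h : Finset α → ℂ)

lemma starMul_comm : starMul f g = starMul g f := by
  funext ω
  refine Finset.sum_nbij' (ω \ ·) (ω \ ·) ?_ ?_ ?_ ?_ ?_ <;>
    intro σ hσ <;> simp only [mem_powerset] at *
  · exact sdiff_subset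
  · exact sdiff_subset
  · exact Finset.sdiff_sdiff_eq_self hσ
  · exact Finset.sdiff_sdiff_eq_self hσ
  · rw [Finset.sdiff_sdiff_eq_self hσ, mul_comm]

lemma starMul_left_comm : starMul f (starMul g h) = starMul g (starMul f h) := by
  funext ω
  simp only [starMul, Finset.mul_sum]
  rw [Finset.sum_comm' (s' := fun τ => (ω \ τ).powerset) (t' := ω.powerset)]
  · refine sum_congr rfl fun τ _ => sum_congr rfl fun σ _ => ?_
    rw [sdiff_sdiff_comm]
    ring
  · intro σ τ
    simp only [mem_powerset, subset_sdiff]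
    tauto

lemma starMul_congr_right {g₁ g₂ : Finset α → ℂ} {ω : Finset α}
    (hg : ∀ τ ⊆ ω, g₁ τ = g₂ τ) : starMul f g₁ ω = starMul f g₂ ω :=
  sum_congr rfl fun σ _ => by rw [hg _ sdiff_subset]

lemma starMul_const_mul_right (c : ℂ) (ω : Finset α) :
    starMul f (fun τ => c * g τ) ω = c * starMul f g ω := by
  simp only [starMul, mul_sum]
  exact sum_congr rfl fun σ _ => by ring

lemma starMul_sum_right {ι : Type*} (s : Finset ι) (c : ι → ℂ) (g : ι → Finset α → ℂ)
    (ω : Finset α) :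
    starMul f (fun τ => ∑ i ∈ s, c i * g i τ) ω = ∑ i ∈ s, c i * starMul f (g i) ω := by
  simp only [starMul, mul_sum]
  rw [sum_comm]
  exact sum_congr rfl fun i _ => sum_congr rfl fun σ _ => by ring

end Convolution

lemma starPow_eq_zero_of_card_lt {ψ : Finset α → ℂ} (hψ : ψ ∅ = 0) :
    ∀ {n : ℕ} {ω : Finset α}, ω.card < n → starPow ψ n ω = 0
  | 0, _, h => absurd h (Nat.not_lt_zero _)
  | n + 1, ω, h => sum_eq_zero fun σ hσ => by
    obtain rfl | hσ₀ := eq_or_ne σ ∅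
    · rw [hψ, zero_mul]
    · have : (ω \ σ).card < ω.card :=
        card_lt_card (sdiff_ssubset (mem_powerset.1 hσ) (nonempty_iff_ne_empty.2 hσ₀))
      rw [starPow_eq_zero_of_card_lt hψ (by omega), mul_zero]

lemma expStar_eq_sum_of_card_le {ψ : Finset α → ℂ} (hψ : ψ ∅ = 0) {ω : Finset α} {N : ℕ}
    (hN : ω.card ≤ N) :
    expStar ψ ω = ∑ n ∈ range (N + 1), (n.factorial : ℂ)⁻¹ * starPow ψ n ω := by
  refine sum_subset (range_subset_range.2 (by omega)) fun n _ hn => ?_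
  rw [starPow_eq_zero_of_card_lt hψ (by simpa using hn), mul_zero]

lemma starMul_expStar {ψ : Finset α → ℂ} (hψ : ψ ∅ = 0) (f : Finset α → ℂ) (ω : Finset α) :
    starMul f (expStar ψ) ω =
      ∑ n ∈ range (ω.card + 1), (n.factorial : ℂ)⁻¹ * starMul f (starPow ψ n) ω := by
  rw [← starMul_sum_right]
  exact starMul_congr_right f fun τ hτ => expStar_eq_sum_of_card_le hψ (card_le_card hτ)

section Derivative

variable {x : α} {ω : Finset α}

lemma Dop_singleton_of_notMem (f : Finset α → ℂ) (hx : x ∉ ω) :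
    Dop {x} f ω = f (insert x ω) := by
  rw [Dop, if_pos (disjoint_singleton_right.2 hx), union_comm, ← insert_eq]

lemma Dop_starUnit : Dop {x} (starUnit : Finset α → ℂ) = 0 := by
  funext ω
  simp [Dop, starUnit]

lemma Dop_starMul (f g : Finset α → ℂ) (hx : x ∉ ω) :
    Dop {x} (starMul f g) ω = starMul (Dop {x} f) g ω + starMul f (Dop {x} g) ω := by
  rw [Dop_singleton_of_notMem _ hx, starMul, sum_powerset_insert hx, add_comm]
  congr 1 <;> refine sum_congr rfl fun σ hσ => ?_
  · have hxσ : x ∉ σ := fun h => hx (mem_powerset.1 hσ h)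
    rw [Dop_singleton_of_notMem _ hxσ, insert_sdiff_insert, sdiff_insert_of_notMem hx]
  · have hxσ : x ∉ ω \ σ := fun h => hx (mem_sdiff.1 h).1
    rw [Dop_singleton_of_notMem _ hxσ,
      insert_sdiff_of_notMem _ fun h => hx (mem_powerset.1 hσ h)]

lemma Dop_starPow_succ (ψ : Finset α → ℂ) (n : ℕ) (hx : x ∉ ω) :
    Dop {x} (starPow ψ (n + 1)) ω = (n + 1) * starMul (Dop {x} ψ) (starPow ψ n) ω := by
  induction n generalizing ω with
  | zero =>
    rw [starPow.eq_2, starPow.eq_1, Dop_starMul _ _ hx, Dop_starUnit]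
    simp [starMul]
  | succ n ih =>
    have hDpow : starMul ψ (Dop {x} (starPow ψ (n + 1))) ω =
        (n + 1) * starMul (Dop {x} ψ) (starPow ψ (n + 1)) ω := by
      rw [starMul_congr_right ψ fun τ hτ => ih fun h => hx (hτ h), starMul_const_mul_right,
        starMul_left_comm]
      rfl
    rw [starPow.eq_2, Dop_starMul _ _ hx, hDpow]
    push_cast
    ring

end Derivative

/-- For every `ψ` with `ψ(∅) = 0`, every `x ∈ α` and every finite `ω` with `x ∉ ω`,
`[D_x(exp* ψ)](ω) = [(exp* ψ) * (D_x ψ)](ω)`. -/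
theorem Dop_expStar (ψ : Finset α → ℂ) (hψ : ψ ∅ = 0) (x : α) (ω : Finset α) (hx : x ∉ ω) :
    Dop {x} (expStar ψ) ω = starMul (expStar ψ) (Dop {x} ψ) ω := by
  have hunit : starPow ψ 0 (insert x ω) = 0 := by simp [starPow, starUnit]
  calc Dop {x} (expStar ψ) ω
      = ∑ m ∈ range (ω.card + 1),
          ((m + 1).factorial : ℂ)⁻¹ * starPow ψ (m + 1) (insert x ω) := by
        rw [Dop_singleton_of_notMem _ hx, expStar, card_insert_of_notMem hx, sum_range_succ',
          hunit, mul_zero, add_zero]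
    _ = ∑ m ∈ range (ω.card + 1),
          (m.factorial : ℂ)⁻¹ * starMul (Dop {x} ψ) (starPow ψ m) ω := by
        refine sum_congr rfl fun m _ => ?_
        rw [← Dop_singleton_of_notMem (starPow ψ (m + 1)) hx, Dop_starPow_succ ψ m hx,
          Nat.factorial_succ]
        push_cast
        field_simp
    _ = starMul (expStar ψ) (Dop {x} ψ) ω := by
        rw [starMul_comm, starMul_expStar hψ]

end
end

section
/- (Single-tree integral bound) Let (Y, 𝒜, μ) be a measure space, g : Y × Y → ℝ≥0 a measurable symmetric function, and C ≥ 0 such that ∫_Y g(y, u) dμ(u) ≤ C for every y ∈ Y. Then for every n ≥ 1, every tree T on the vertex set {1, …, n+1}, and every x ∈ Y: ∫_{Y^n} ∏_{{i,j} ∈ T} g(ŷ_i, ŷ_j) dμ^{⊗n}(y₁, …, y_n) ≤ C^{n−1} · ∫_Y g(x, u) dμ(u), where ŷ_i := y_i for 1 ≤ i ≤ n and ŷ_{n+1} := x. -/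
open MeasureTheory ENNReal

noncomputable section

/-- Weight of an unordered pair of vertices: `{i,j} ↦ g(f(i), f(j))` for a symmetric `g`. -/
def sym2Weight {V Y : Type*} (g : Y → Y → NNReal) (hg : ∀ a b, g a b = g b a)
    (f : V → Y) : Sym2 V → NNReal :=
  Sym2.lift ⟨fun i j => g (f i) (f j), fun i j => hg (f i) (f j)⟩

/-!
Root the tree at the vertex `n + 1` carrying the fixed point `x`. A finite tree can be grown
from any root by attaching leaves one at a time, so it can also be dismantled by removing
leaves other than the root. Integrating out the variable of a leaf `v` with neighbour `w`
factors off `∫ g(y_v, y_w) dμ(y_v) ≤ C` and leaves the product over the smaller tree. After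
`n - 1` such steps a single edge `{v, n + 1}` remains, whose integral is `∫ g(x, u) dμ(u)`.
-/

open Finset

/-- `IsRootedTree r A T`: the edges `T` form a tree on the vertices `A`, obtained from the single
vertex `r` by repeatedly attaching a new leaf. -/
inductive IsRootedTree {V : Type*} [DecidableEq V] (r : V) : Finset V → Finset (Sym2 V) → Prop
  | root : IsRootedTree r {r} ∅
  | attach {A : Finset V} {T : Finset (Sym2 V)} {v w : V} :
      IsRootedTree r A T → v ∉ A → w ∈ A → IsRootedTree r (insert v A) (insert s(v, w) T)

namespace IsRootedTree

variable {V W : Type*} [DecidableEq V] [DecidableEq W] {r : V} {A : Finset V}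
  {T : Finset (Sym2 V)}

theorem root_mem (h : IsRootedTree r A T) : r ∈ A := by
  induction h with
  | root => exact mem_singleton_self r
  | attach _ _ _ ih => exact mem_insert_of_mem ih

theorem mem_of_mem_edge (h : IsRootedTree r A T) {e : Sym2 V} (he : e ∈ T) {u : V}
    (hu : u ∈ e) : u ∈ A := by
  induction h with
  | root => simp at he
  | attach _ _ hw ih =>
    rcases mem_insert.1 he with rfl | he
    · rcases Sym2.mem_iff.1 hu with rfl | rfl
      · exact mem_insert_self _ _
      · exact mem_insert_of_mem hw
    · exact mem_insert_of_mem (ih he)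

theorem eq_singleton_of_edges_eq_empty (h : IsRootedTree r A T) (hT : T = ∅) : A = {r} := by
  cases h with
  | root => rfl
  | attach => simp at hT

theorem map (h : IsRootedTree r A T) (f : V ↪ W) :
    IsRootedTree (f r) (A.map f) (T.map f.sym2Map) := by
  induction h with
  | root => simpa using root
  | attach _ hv hw ih =>
    rw [map_insert, map_insert]
    exact ih.attach (by simpa using hv) (mem_map_of_mem f hw)

end IsRootedTree

namespace SimpleGraph

variable {V : Type*} [DecidableEq V] [Fintype V] {G : SimpleGraph V} [DecidableRel G.Adj]

theorem edgeFinset_inter_sym2_compl_singleton {l w : V} (hw : ∀ u, G.Adj l u → u = w) :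
    G.edgeFinset ∩ (({l}ᶜ : Set V).toFinset).sym2 = G.edgeFinset.erase s(l, w) := by
  ext e
  induction e with
  | _ a b =>
    simp only [mem_inter, mem_edgeFinset, mem_edgeSet, mem_sym2_iff, Sym2.mem_iff,
      Set.mem_toFinset, Set.mem_compl_iff, Set.mem_singleton_iff, mem_erase, ne_eq,
      Sym2.eq_iff, forall_eq_or_imp, forall_eq]
    constructor
    · rintro ⟨hab, ha, hb⟩
      exact ⟨by tauto, hab⟩
    · rintro ⟨hne, hab⟩
      refine ⟨hab, ?_, ?_⟩ <;> rintro rfl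
      · exact hne (Or.inl ⟨rfl, hw b hab⟩)
      · exact hne (Or.inr ⟨hw a hab.symm, rfl⟩)

theorem IsTree.isRootedTree (hG : G.IsTree) (r : V) :
    IsRootedTree r univ G.edgeFinset := by
  induction hn : Fintype.card V generalizing V with
  | zero => exact absurd hn (Fintype.card_pos_iff.2 ⟨r⟩).ne'
  | succ n ih =>
    rcases subsingleton_or_nontrivial V with hV | hV
    · have hcard := hG.card_edgeFinset
      have hV1 := Fintype.card_le_one_iff_subsingleton.2 hV
      rw [card_eq_zero.1 (show #G.edgeFinset = 0 by omega),
        eq_singleton_iff_unique_mem.2 ⟨mem_univ r, fun u _ => Subsingleton.elim u r⟩]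
      exact .root
    · obtain ⟨l, hlr, hl⟩ : ∃ l, l ≠ r ∧ G.degree l = 1 := by
        obtain ⟨u, v, huv, hu, hv⟩ := hG.exists_ne_and_degree_eq_one
        rcases eq_or_ne u r with rfl | hur
        · exact ⟨v, huv.symm, hv⟩
        · exact ⟨u, hur, hu⟩
      obtain ⟨w, hlw, hw⟩ := degree_eq_one_iff_existsUnique_adj.1 hl
      have hG' : (G.induce {l}ᶜ).IsTree :=
        ⟨hG.connected.induce_compl_singleton_of_degree_eq_one hl, hG.isAcyclic.induce _⟩
      have hA : (univ : Finset V)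
          = insert l ((univ : Finset ({l}ᶜ : Set V)).map (Function.Embedding.subtype _)) := by
        ext u
        by_cases hu : u = l <;> simp [hu]
      have hT : G.edgeFinset = insert s(l, w)
          ((G.induce {l}ᶜ).edgeFinset.map (Function.Embedding.subtype _).sym2Map) := by
        rw [map_edgeFinset_induce, edgeFinset_inter_sym2_compl_singleton hw, insert_erase]
        simpa using hlw
      have h' := (ih hG' ⟨r, hlr.symm⟩ (by simp [filter_ne', hn])).map
        (Function.Embedding.subtype _)
      rw [hA, hT]
      exact h'.attach (by simp) (by simpa using hlw.ne.symm)

end SimpleGraph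

section TreeIntegral

variable {V Y : Type*} {g : Y → Y → NNReal} (hsym : ∀ a b, g a b = g b a)

@[simp] theorem sym2Weight_mk (f : V → Y) (i j : V) :
    sym2Weight g hsym f s(i, j) = g (f i) (f j) := rfl

theorem sym2Weight_update [DecidableEq V] (f : V → Y) {v : V} (y : Y) {e : Sym2 V}
    (hv : v ∉ e) :
    sym2Weight g hsym (Function.update f v y) e = sym2Weight g hsym f e := by
  induction e with
  | _ i j =>
    simp only [Sym2.mem_iff, not_or] at hv
    simp [Function.update_of_ne (Ne.symm hv.1), Function.update_of_ne (Ne.symm hv.2)]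

variable [MeasurableSpace Y] {μ : Measure Y}

theorem measurable_prod_sym2Weight (hmeas : Measurable (Function.uncurry g))
    (T : Finset (Sym2 V)) :
    Measurable fun f : V → Y => ∏ e ∈ T, (sym2Weight g hsym f e : ℝ≥0∞) := by
  refine Finset.measurable_prod _ fun e _ => ?_
  induction e with
  | _ i j =>
    exact show Measurable fun f : V → Y => (g (f i) (f j) : ℝ≥0∞) by fun_prop

variable [DecidableEq V]

theorem lintegral_prod_sym2Weight_update_leaf (hmeas : Measurable (Function.uncurry g))
    {T : Finset (Sym2 V)} {v w : V} (hvw : v ≠ w) (hvT : ∀ e ∈ T, v ∉ e) (f : V → Y) :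
    ∫⁻ u, ∏ e ∈ insert s(v, w) T, (sym2Weight g hsym (Function.update f v u) e : ℝ≥0∞) ∂μ
      = (∫⁻ u, (g (f w) u : ℝ≥0∞) ∂μ) * ∏ e ∈ T, (sym2Weight g hsym f e : ℝ≥0∞) := by
  rw [← lintegral_mul_const'' _ hmeas.of_uncurry_left.coe_nnreal_ennreal.aemeasurable]
  refine lintegral_congr fun u => ?_
  rw [prod_insert fun h => hvT _ h (Sym2.mem_mk_left v w)]
  simp only [sym2Weight_mk, Function.update_self, Function.update_of_ne hvw.symm, hsym u]
  congr 1
  exact prod_congr rfl fun e he => by rw [sym2Weight_update hsym f u (hvT e he)]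

theorem IsRootedTree.lmarginal_prod_sym2Weight_le [SigmaFinite μ]
    (hmeas : Measurable (Function.uncurry g)) {C : NNReal}
    (hC : ∀ y, ∫⁻ u, (g y u : ℝ≥0∞) ∂μ ≤ C) {r : V} {A : Finset V} {T : Finset (Sym2 V)}
    (h : IsRootedTree r A T) (hT : T.Nonempty) (z : V → Y) :
    (∫⋯∫⁻_A.erase r, (fun f => ∏ e ∈ T, (sym2Weight g hsym f e : ℝ≥0∞)) ∂fun _ => μ) z
      ≤ (C : ℝ≥0∞) ^ (#T - 1) * ∫⁻ u, (g (z r) u : ℝ≥0∞) ∂μ := by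
  induction h generalizing z with
  | root => simp at hT
  | @attach A T v w hAT hv hw ih =>
    have hvr : v ≠ r := ne_of_mem_of_not_mem hAT.root_mem hv |>.symm
    have hvT : ∀ e ∈ T, v ∉ e := fun e he hve => hv (hAT.mem_of_mem_edge he hve)
    rw [erase_insert_of_ne hvr, lmarginal_insert' _ (measurable_prod_sym2Weight hsym hmeas _)
      fun h => hv (mem_of_mem_erase h)]
    simp_rw [lintegral_prod_sym2Weight_update_leaf hsym hmeas (ne_of_mem_of_not_mem hw hv).symm
      hvT]
    rcases T.eq_empty_or_nonempty with rfl | hT'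
    · -- the last edge `s(v, r)` is integrated exactly, without the loss of a factor `C`
      obtain rfl := hAT.eq_singleton_of_edges_eq_empty rfl
      obtain rfl := mem_singleton.1 hw
      simp
    · calc _ ≤ (∫⋯∫⁻_A.erase r, (fun f => C * ∏ e ∈ T, (sym2Weight g hsym f e : ℝ≥0∞))
              ∂fun _ => μ) z :=
            lmarginal_mono (fun f => by gcongr; exact hC (f w)) z
        _ = C * (∫⋯∫⁻_A.erase r, (fun f => ∏ e ∈ T, (sym2Weight g hsym f e : ℝ≥0∞))
              ∂fun _ => μ) z := lintegral_const_mul' _ _ coe_ne_top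
        _ ≤ C * (C ^ (#T - 1) * ∫⁻ u, (g (z r) u : ℝ≥0∞) ∂μ) := by gcongr; exact ih hT' z
        _ = _ := by
          rw [card_insert_of_notMem fun h => hvT _ h (Sym2.mem_mk_left v w), ← mul_assoc,
            ← pow_succ', Nat.sub_add_cancel hT'.card_pos, Nat.add_sub_cancel]

end TreeIntegral

theorem lintegral_comp_snoc_eq_lmarginal {Y : Type*} [MeasurableSpace Y] (μ : Measure Y)
    [SigmaFinite μ] {n : ℕ} {F : (Fin (n + 1) → Y) → ℝ≥0∞} (hF : Measurable F) (x : Y) :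
    ∫⁻ y : Fin n → Y, F (Fin.snoc y x) ∂Measure.pi (fun _ => μ)
      = (∫⋯∫⁻_univ.erase (Fin.last n), F ∂fun _ => μ) fun _ => x := by
  have hsnoc : Measurable fun y : Fin n → Y => F (Fin.snoc y x) :=
    hF.comp <| measurable_pi_lambda _ fun i => by
      induction i using Fin.lastCases <;> simp [measurable_pi_apply]
  rw [lintegral_eq_lmarginal_univ (fun _ => x)]
  refine (lmarginal_image (X := fun _ => Y) (μ := fun _ => μ) (Fin.castSucc_injective n) univ
    hsnoc (fun _ => x)).symm.trans ?_
  rw [Fin.image_castSucc, compl_singleton]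
  refine lintegral_congr fun y => congrArg F (funext fun i => ?_)
  induction i using Fin.lastCases with
  | last => simp [Function.updateFinset]
  | cast i => simp [Function.updateFinset]

/-- Single-tree integral bound: if `g : Y × Y → ℝ≥0` is measurable and symmetric with
`∫_Y g(y, u) dμ(u) ≤ C` for every `y`, then for every `n ≥ 1`, every tree `T` on the vertex set
`{1, …, n+1}` and every `x ∈ Y`,
`∫_{Y^n} ∏_{{i,j} ∈ T} g(ŷ_i, ŷ_j) dμ^{⊗n} ≤ C^{n−1} · ∫_Y g(x, u) dμ(u)`,
where `ŷ_i := y_i` for `i ≤ n` and `ŷ_{n+1} := x`. -/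
theorem tree_integral_bound {Y : Type*} [MeasurableSpace Y] (μ : Measure Y) [SigmaFinite μ]
    (g : Y → Y → NNReal) (hmeas : Measurable (Function.uncurry g))
    (hsym : ∀ a b, g a b = g b a) (C : NNReal)
    (hC : ∀ y : Y, ∫⁻ u, (g y u : ℝ≥0∞) ∂μ ≤ C)
    (n : ℕ) (hn : 1 ≤ n) (T : Finset (Sym2 (Fin (n + 1))))
    (hdiag : ∀ e ∈ T, ¬ e.IsDiag)
    (htree : (SimpleGraph.fromEdgeSet (↑T : Set (Sym2 (Fin (n + 1))))).IsTree)
    (x : Y) :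
    ∫⁻ y : Fin n → Y,
        (∏ e ∈ T, (sym2Weight g hsym (Fin.snoc y x) e : ℝ≥0∞))
        ∂(Measure.pi fun _ : Fin n => μ)
      ≤ (C : ℝ≥0∞) ^ (n - 1) * ∫⁻ u, (g x u : ℝ≥0∞) ∂μ := by
  classical
  have hedges : (SimpleGraph.fromEdgeSet (T : Set (Sym2 (Fin (n + 1))))).edgeFinset = T := by
    ext e
    simpa using hdiag e
  have hcard : #T = n := by
    simpa [hedges] using htree.card_edgeFinset
  have hrooted : IsRootedTree (Fin.last n) univ T := by
    convert htree.isRootedTree (Fin.last n)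
    convert hedges.symm
  have hbound := hrooted.lmarginal_prod_sym2Weight_le hsym hmeas hC (card_pos.1 (by omega))
    fun _ => x
  rwa [hcard, ← lintegral_comp_snoc_eq_lmarginal μ (measurable_prod_sym2Weight hsym hmeas T)]
    at hbound
end
end

section
/- (Characterization of the integrability condition) Let (Y, 𝒜, ν) be a measure space with ν σ-finite, β > 0, B' ≥ 0, and φ : Y × Y → ℝ measurable and symmetric with φ(y,x) ≥ −B' for all y, x. Then the following are equivalent: (i) ess sup_{y ∈ Y} ∫_Y |e^{−βφ(y,x)} − 1| dν(x) < ∞; (ii) there exists α > 0 such that, with A_α(y) := { x ∈ Y | φ(y,x) > α }, both ess sup_{y ∈ Y} ν(A_α(y)) < ∞ and ess sup_{y ∈ Y} ∫_{Y \ A_α(y)} |φ(y,x)| dν(x) < ∞. In particular, whether (i) holds does not depend on the value of β > 0. -/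
open MeasureTheory ENNReal

private lemma ptw1 (t : ℝ) (ht : t ≤ 1) : Real.exp (-1) * |t| ≤ |Real.exp (-t) - 1| := by
  rcases le_or_gt t 0 with h | h
  · rw [abs_of_nonpos h, abs_of_nonneg (by nlinarith [Real.add_one_le_exp (-t)])]
    nlinarith [Real.add_one_le_exp (-t), Real.exp_pos (-1),
      Real.exp_le_one_iff.2 (by linarith : (-1:ℝ) ≤ 0)]
  · rw [abs_of_pos h, abs_of_nonpos (by nlinarith [Real.exp_le_one_iff.2 (by linarith : -t ≤ 0)])]
    have h0 : Real.exp (-t) * Real.exp t = 1 := by rw [← Real.exp_add]; simp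
    nlinarith [Real.add_one_le_exp t, Real.exp_pos (-t),
      Real.exp_monotone (by linarith : (-1:ℝ) ≤ -t), mul_pos (Real.exp_pos (-t)) h]

private lemma ptw2 (t : ℝ) (ht : 1 < t) : 1 - Real.exp (-1) ≤ |Real.exp (-t) - 1| := by
  rw [abs_of_nonpos (by nlinarith [Real.exp_le_one_iff.2 (by linarith : -t ≤ 0)])]
  have := Real.exp_monotone (by linarith : -t ≤ -1)
  linarith

private lemma ptw3 (t : ℝ) (ht : 0 < t) : |Real.exp (-t) - 1| ≤ 1 := by
  rw [abs_of_nonpos (by nlinarith [Real.exp_le_one_iff.2 (by linarith : -t ≤ 0)])]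
  nlinarith [Real.exp_pos (-t)]

private lemma ptw4 (c t : ℝ) (hc : 0 ≤ c) (ht : -c ≤ t) :
    |Real.exp (-t) - 1| ≤ Real.exp c * |t| := by
  rcases le_or_gt 0 t with h | h
  · rw [abs_of_nonneg h, abs_of_nonpos (by nlinarith [Real.exp_le_one_iff.2 (by linarith : -t ≤ 0)])]
    nlinarith [Real.add_one_le_exp (-t), Real.one_le_exp hc]
  · rw [abs_of_neg h, abs_of_nonneg (by nlinarith [Real.add_one_le_exp (-t)])]
    have h1 := Real.add_one_le_exp t
    have h2 : Real.exp (-t) ≤ Real.exp c := Real.exp_monotone (by linarith)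
    have h0 : Real.exp (-t) * Real.exp t = 1 := by rw [← Real.exp_add]; simp
    nlinarith [Real.exp_pos (-t), Real.exp_pos t, mul_pos (Real.exp_pos t) (Real.exp_pos (-t))]

private lemma key {Y : Type*} [MeasurableSpace Y] (ν : Measure Y) (β : ℝ) (hβ : 0 < β)
    (B' : ℝ) (hB' : 0 ≤ B') (φ : Y → Y → ℝ) (hmeas : Measurable (Function.uncurry φ))
    (hlb : ∀ a b, -B' ≤ φ a b) :
    (essSup (fun y => ∫⁻ x, ENNReal.ofReal |Real.exp (-β * φ y x) - 1| ∂ν) ν < ⊤) ↔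
      (∃ a : ℝ, 0 < a ∧
        essSup (fun y => ν {x | a < φ y x}) ν < ⊤ ∧
        essSup (fun y => ∫⁻ x in {x | φ y x ≤ a}, ENNReal.ofReal |φ y x| ∂ν) ν < ⊤) := by
  have hφy : ∀ y, Measurable (φ y) := fun y => hmeas.comp measurable_prodMk_left
  have hneg : ∀ y x, -β * φ y x = -(β * φ y x) := fun y x => by ring
  constructor
  · intro h
    set F : Y → ℝ≥0∞ := fun y => ∫⁻ x, ENNReal.ofReal |Real.exp (-β * φ y x) - 1| ∂ν with hF
    set E := essSup F ν with hE
    have hc : (0:ℝ) < 1 - Real.exp (-1) := by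
      have : Real.exp (-1) < Real.exp 0 := Real.exp_lt_exp.2 (by norm_num)
      simp only [Real.exp_zero] at this; linarith
    refine ⟨β⁻¹, by positivity, ?_, ?_⟩
    · refine lt_of_le_of_lt
        (essSup_le_of_ae_le (E / ENNReal.ofReal (1 - Real.exp (-1))) ?_) ?_
      · filter_upwards [ae_le_essSup F] with y hy
        have hs : MeasurableSet {x | β⁻¹ < φ y x} := measurableSet_lt measurable_const (hφy y)
        have hle : ENNReal.ofReal (1 - Real.exp (-1)) * ν {x | β⁻¹ < φ y x} ≤ F y := by
          calc ENNReal.ofReal (1 - Real.exp (-1)) * ν {x | β⁻¹ < φ y x}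
              = ∫⁻ _ in {x | β⁻¹ < φ y x}, ENNReal.ofReal (1 - Real.exp (-1)) ∂ν := by
                rw [setLIntegral_const]
            _ ≤ ∫⁻ x in {x | β⁻¹ < φ y x},
                  ENNReal.ofReal |Real.exp (-β * φ y x) - 1| ∂ν := by
                refine setLIntegral_mono' hs fun x hx => ?_
                refine ENNReal.ofReal_le_ofReal ?_
                rw [hneg]
                exact ptw2 _ (by
                  have : β⁻¹ < φ y x := hx
                  calc (1:ℝ) = β * β⁻¹ := by field_simp
                    _ < β * φ y x := by exact mul_lt_mul_of_pos_left this hβ)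
            _ ≤ F y := setLIntegral_le_lintegral _ _
        calc ν {x | β⁻¹ < φ y x}
            ≤ F y / ENNReal.ofReal (1 - Real.exp (-1)) := by
              rw [ENNReal.le_div_iff_mul_le (Or.inl (ENNReal.ofReal_pos.2 hc).ne')
                (Or.inl ENNReal.ofReal_ne_top), mul_comm]
              exact hle
          _ ≤ E / ENNReal.ofReal (1 - Real.exp (-1)) :=
              ENNReal.div_le_div_right hy _
      · exact ENNReal.div_lt_top h.ne (ENNReal.ofReal_pos.2 hc).ne'
    · refine lt_of_le_of_lt
        (essSup_le_of_ae_le (ENNReal.ofReal (Real.exp 1 / β) * E) ?_) ?_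
      · filter_upwards [ae_le_essSup F] with y hy
        calc ∫⁻ x in {x | φ y x ≤ β⁻¹}, ENNReal.ofReal |φ y x| ∂ν
            ≤ ∫⁻ x in {x | φ y x ≤ β⁻¹},
                ENNReal.ofReal (Real.exp 1 / β) *
                  ENNReal.ofReal |Real.exp (-β * φ y x) - 1| ∂ν := by
              refine setLIntegral_mono' (measurableSet_le (hφy y) measurable_const) fun x hx => ?_
              rw [← ENNReal.ofReal_mul (by positivity)]
              refine ENNReal.ofReal_le_ofReal ?_
              have ht : β * φ y x ≤ 1 := by
                have hx' : φ y x ≤ β⁻¹ := hx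
                calc β * φ y x ≤ β * β⁻¹ := mul_le_mul_of_nonneg_left hx' hβ.le
                  _ = 1 := by field_simp
              have h1 := ptw1 (β * φ y x) ht
              rw [← hneg] at h1
              have habs : |β * φ y x| = β * |φ y x| := by
                rw [abs_mul, abs_of_pos hβ]
              rw [habs] at h1
              have he : Real.exp (-1) * Real.exp 1 = 1 := by rw [← Real.exp_add]; simp
              have hep := Real.exp_pos (-1)
              have hep1 := Real.exp_pos 1
              rw [div_mul_eq_mul_div, le_div_iff₀ hβ]
              nlinarith [abs_nonneg (Real.exp (-β * φ y x) - 1)]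
          _ = ENNReal.ofReal (Real.exp 1 / β) *
                ∫⁻ x in {x | φ y x ≤ β⁻¹},
                  ENNReal.ofReal |Real.exp (-β * φ y x) - 1| ∂ν :=
              lintegral_const_mul' _ _ ENNReal.ofReal_ne_top
          _ ≤ ENNReal.ofReal (Real.exp 1 / β) * F y :=
              mul_le_mul_right (setLIntegral_le_lintegral _ _) _
          _ ≤ ENNReal.ofReal (Real.exp 1 / β) * E := mul_le_mul_right hy _
      · exact ENNReal.mul_lt_top ENNReal.ofReal_lt_top h
  · rintro ⟨a, ha, h1, h2⟩
    set G1 : Y → ℝ≥0∞ := fun y => ν {x | a < φ y x} with hG1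
    set G2 : Y → ℝ≥0∞ := fun y => ∫⁻ x in {x | φ y x ≤ a}, ENNReal.ofReal |φ y x| ∂ν with hG2
    set c := ENNReal.ofReal (β * Real.exp (β * B')) with hcdef
    refine lt_of_le_of_lt
      (essSup_le_of_ae_le (essSup G1 ν + c * essSup G2 ν) ?_) ?_
    · filter_upwards [ae_le_essSup G1, ae_le_essSup G2] with y hy1 hy2
      have hs : MeasurableSet {x | a < φ y x} := measurableSet_lt measurable_const (hφy y)
      have hcompl : {x | a < φ y x}ᶜ = {x | φ y x ≤ a} := by ext x; simp [not_lt]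
      calc (∫⁻ x, ENNReal.ofReal |Real.exp (-β * φ y x) - 1| ∂ν)
          = (∫⁻ x in {x | a < φ y x}, ENNReal.ofReal |Real.exp (-β * φ y x) - 1| ∂ν)
            + ∫⁻ x in {x | a < φ y x}ᶜ, ENNReal.ofReal |Real.exp (-β * φ y x) - 1| ∂ν :=
            (lintegral_add_compl _ hs).symm
        _ ≤ G1 y + c * G2 y := by
            refine add_le_add ?_ ?_
            · calc (∫⁻ x in {x | a < φ y x}, ENNReal.ofReal |Real.exp (-β * φ y x) - 1| ∂ν)
                  ≤ ∫⁻ _ in {x | a < φ y x}, 1 ∂ν := by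
                    refine setLIntegral_mono' hs fun x hx => ?_
                    calc ENNReal.ofReal |Real.exp (-β * φ y x) - 1|
                        ≤ ENNReal.ofReal 1 := by
                          refine ENNReal.ofReal_le_ofReal ?_
                          rw [hneg]
                          exact ptw3 _ (mul_pos hβ (lt_trans ha hx))
                      _ = 1 := ENNReal.ofReal_one
                _ = G1 y := by rw [setLIntegral_const, one_mul]
            · rw [hcompl]
              calc (∫⁻ x in {x | φ y x ≤ a}, ENNReal.ofReal |Real.exp (-β * φ y x) - 1| ∂ν)
                  ≤ ∫⁻ x in {x | φ y x ≤ a}, c * ENNReal.ofReal |φ y x| ∂ν := by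
                    refine setLIntegral_mono' (measurableSet_le (hφy y) measurable_const)
                      fun x _ => ?_
                    rw [hcdef, ← ENNReal.ofReal_mul (by positivity)]
                    refine ENNReal.ofReal_le_ofReal ?_
                    have h4 := ptw4 (β * B') (β * φ y x) (by positivity)
                      (by nlinarith [hlb y x])
                    rw [← hneg] at h4
                    rw [abs_mul, abs_of_pos hβ] at h4
                    calc |Real.exp (-β * φ y x) - 1|
                        ≤ Real.exp (β * B') * (β * |φ y x|) := h4
                      _ = β * Real.exp (β * B') * |φ y x| := by ring
                _ = c * G2 y := lintegral_const_mul' _ _ ENNReal.ofReal_ne_top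
        _ ≤ essSup G1 ν + c * essSup G2 ν :=
            add_le_add hy1 (mul_le_mul_right hy2 _)
    · exact ENNReal.add_lt_top.2 ⟨h1, ENNReal.mul_lt_top ENNReal.ofReal_lt_top h2⟩

/-- Characterization of the integrability condition: for a σ-finite measure `ν`, `β > 0` and a
measurable symmetric pair potential `φ` bounded below by `−B'`, the condition
(i) `ess sup_y ∫ |e^{−βφ(y,x)} − 1| dν(x) < ∞` holds iff
(ii) there is `α > 0` such that, with `A_α(y) := {x | φ(y,x) > α}`, both
`ess sup_y ν(A_α(y)) < ∞` and `ess sup_y ∫_{Y \ A_α(y)} |φ(y,x)| dν(x) < ∞`.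
In particular (i) is independent of `β > 0`. -/
theorem integrability_condition_characterization {Y : Type*} [MeasurableSpace Y]
    (ν : Measure Y) [SigmaFinite ν] (β : ℝ) (hβ : 0 < β) (B' : ℝ) (hB' : 0 ≤ B')
    (φ : Y → Y → ℝ) (hmeas : Measurable (Function.uncurry φ))
    (hsym : ∀ a b, φ a b = φ b a) (hlb : ∀ a b, -B' ≤ φ a b) :
    ((essSup (fun y => ∫⁻ x, ENNReal.ofReal |Real.exp (-β * φ y x) - 1| ∂ν) ν < ⊤) ↔
      (∃ a : ℝ, 0 < a ∧
        essSup (fun y => ν {x | a < φ y x}) ν < ⊤ ∧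
        essSup (fun y => ∫⁻ x in {x | φ y x ≤ a}, ENNReal.ofReal |φ y x| ∂ν) ν < ⊤)) ∧
    (∀ β' : ℝ, 0 < β' →
      ((essSup (fun y => ∫⁻ x, ENNReal.ofReal |Real.exp (-β * φ y x) - 1| ∂ν) ν < ⊤) ↔
        (essSup (fun y => ∫⁻ x, ENNReal.ofReal |Real.exp (-β' * φ y x) - 1| ∂ν) ν < ⊤))) := by
  refine ⟨key ν β hβ B' hB' φ hmeas hlb, fun β' hβ' => ?_⟩
  rw [key ν β hβ B' hB' φ hmeas hlb, key ν β' hβ' B' hB' φ hmeas hlb]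
end
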